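/- arXiv:2507.19284 — 2 statements merged into one kernel-verified Lean document; each statement's English description precedes it below -/
import Mathlib

section
/- Vector soft-thresholding: for w ∈ ℝⁿ and r > 0, the unique minimizer of p ↦ ‖p‖₂ + (r/2)‖p - w‖₂² is p* = (1 - 1/(r‖w‖₂))·w when ‖w‖₂ > 1/r, and p* = 0 when ‖w‖₂ ≤ 1/r. -/
/-!
The point `s` minimizes `p ↦ ‖p‖ + (r/2)‖p - w‖²` as soon as `g = r • (w - s)` is a subgradient
of the norm at `s`, i.e. `‖g‖ ≤ 1` and `⟪g, s⟫ = ‖s‖`. The soft-thresholded vector satisfies both,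
with `g = r • w` when `r‖w‖ ≤ 1` and `g = w / ‖w‖` otherwise. Expanding the square then shows that
the objective grows at least like `(r/2)‖p - s‖²` away from `s`, which gives minimality and
uniqueness at once.
-/

theorem forall_le_and_unique_of_quadratic_growth {E : Type*} [NormedAddCommGroup E] {f : E → ℝ}
    {s : E} {c : ℝ} (hc : 0 < c) (h : ∀ p, f s + c * ‖p - s‖ ^ 2 ≤ f p) :
    (∀ p, f s ≤ f p) ∧ ∀ p, (∀ q, f p ≤ f q) → p = s := by
  refine ⟨fun p => by nlinarith [h p, sq_nonneg ‖p - s‖], fun p hp => ?_⟩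
  have hsq : ‖p - s‖ ^ 2 ≤ 0 := by nlinarith [h p, hp s]
  have hnorm : ‖p - s‖ = 0 := pow_eq_zero_iff two_ne_zero |>.mp (le_antisymm hsq (sq_nonneg _))
  exact sub_eq_zero.mp (norm_eq_zero.mp hnorm)

section

variable {E : Type*} [NormedAddCommGroup E] [InnerProductSpace ℝ E]

theorem norm_add_inner_sub_le_norm {g s : E} (hg : ‖g‖ ≤ 1) (hgs : inner ℝ g s = ‖s‖) (p : E) :
    ‖s‖ + inner ℝ g (p - s) ≤ ‖p‖ :=
  calc ‖s‖ + inner ℝ g (p - s) = inner ℝ g p := by rw [inner_sub_right, hgs]; ring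
    _ ≤ ‖g‖ * ‖p‖ := real_inner_le_norm g p
    _ ≤ ‖p‖ := mul_le_of_le_one_left (norm_nonneg p) hg

theorem add_mul_norm_sub_sq_le_of_subgradient {r : ℝ} {w s : E}
    (h : ∀ p, ‖s‖ + inner ℝ (r • (w - s)) (p - s) ≤ ‖p‖) (p : E) :
    ‖s‖ + r / 2 * ‖s - w‖ ^ 2 + r / 2 * ‖p - s‖ ^ 2 ≤ ‖p‖ + r / 2 * ‖p - w‖ ^ 2 := by
  have hexp : ‖p - w‖ ^ 2 = ‖p - s‖ ^ 2 + 2 * inner ℝ (p - s) (s - w) + ‖s - w‖ ^ 2 := by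
    rw [show p - w = (p - s) + (s - w) by abel, norm_add_sq_real]
  have hinner : inner ℝ (r • (w - s)) (p - s) = -r * inner ℝ (p - s) (s - w) := by
    rw [real_inner_smul_left, real_inner_comm, ← neg_sub s w, inner_neg_right]; ring
  linear_combination h p - r / 2 * hexp - hinner

noncomputable def softThreshold (r : ℝ) (w : E) : E :=
  if ‖w‖ > 1 / r then (1 - 1 / (r * ‖w‖)) • w else 0

theorem norm_add_inner_softThreshold_le {r : ℝ} (hr : 0 < r) (w p : E) :
    ‖softThreshold r w‖ + inner ℝ (r • (w - softThreshold r w)) (p - softThreshold r w) ≤ ‖p‖ := by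
  unfold softThreshold
  split_ifs with hw
  · have hw0 : 0 < ‖w‖ := (one_div_pos.mpr hr).trans hw
    have hrw : 1 < r * ‖w‖ := by rwa [gt_iff_lt, div_lt_iff₀ hr, mul_comm] at hw
    have hg : r • (w - (1 - 1 / (r * ‖w‖)) • w) = ‖w‖⁻¹ • w := by
      rw [sub_smul, one_smul, sub_sub_cancel, smul_smul]
      congr 1
      field_simp
    apply norm_add_inner_sub_le_norm
    · rw [hg, norm_smul, norm_inv, norm_norm, inv_mul_cancel₀ hw0.ne']
    · have hpos : 0 ≤ 1 - 1 / (r * ‖w‖) := by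
        rw [sub_nonneg, div_le_one (by positivity)]; exact hrw.le
      rw [hg, real_inner_smul_left, real_inner_smul_right, real_inner_self_eq_norm_sq, norm_smul,
        Real.norm_of_nonneg hpos]
      field_simp
  · apply norm_add_inner_sub_le_norm
    · rw [sub_zero, norm_smul, Real.norm_of_nonneg hr.le]
      exact (le_div_iff₀' hr).mp (not_lt.mp hw)
    · simp

end

/-- Vector soft-thresholding: the unique minimizer of `p ↦ ‖p‖ + (r/2)‖p - w‖²`. -/
theorem soft_thresholding_vector (n : ℕ) (w : EuclideanSpace ℝ (Fin n)) (r : ℝ) (hr : 0 < r) :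
    let pstar : EuclideanSpace ℝ (Fin n) :=
      if ‖w‖ > 1 / r then (1 - 1 / (r * ‖w‖)) • w else 0
    (∀ p : EuclideanSpace ℝ (Fin n),
        ‖pstar‖ + r / 2 * ‖pstar - w‖ ^ 2 ≤ ‖p‖ + r / 2 * ‖p - w‖ ^ 2) ∧
    (∀ p : EuclideanSpace ℝ (Fin n),
        (∀ q : EuclideanSpace ℝ (Fin n),
          ‖p‖ + r / 2 * ‖p - w‖ ^ 2 ≤ ‖q‖ + r / 2 * ‖q - w‖ ^ 2) → p = pstar) :=
  forall_le_and_unique_of_quadratic_growth (f := fun p => ‖p‖ + r / 2 * ‖p - w‖ ^ 2) (half_pos hr)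
    (add_mul_norm_sub_sq_le_of_subgradient (norm_add_inner_softThreshold_le hr w))
end

section
/- Subdifferential optimality transfer to the limit: suppose for each l, 0 ∈ ∂‖p^l‖₁ + λ^{l-1} + r(p^l - w^l) with r > 0, and p^l → p*, λ^l → λ*, w^l → w* with p* = w*. Then 0 ∈ ∂‖p*‖₁ + λ*, i.e. -λ* ∈ ∂‖p*‖₁. -/
open Finset Filter Topology

/-- The ℓ¹ norm on `ℝ^N`. -/
def l1Norm {N : ℕ} (x : Fin N → ℝ) : ℝ := ∑ i, |x i|

/-- The convex subdifferential of the ℓ¹ norm on `ℝ^N` at `x`. -/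
def l1Subdiff {N : ℕ} (x : Fin N → ℝ) : Set (Fin N → ℝ) :=
  {v | ∀ y : Fin N → ℝ, l1Norm x + ∑ i, v i * (y i - x i) ≤ l1Norm y}

/-- Subdifferential optimality passes to the limit: if
`0 ∈ ∂‖p^l‖₁ + λ^{l-1} + r(p^l - w^l)` at every iteration and
`p^l → p*`, `λ^l → λ*`, `w^l → w*` with `p* = w*`, then `-λ* ∈ ∂‖p*‖₁`. -/
theorem l1_subdiff_limit {N : ℕ} (r : ℝ) (hr : 0 < r)
    (p w : ℕ → (Fin N → ℝ)) (lam : ℕ → (Fin N → ℝ))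
    (pstar wstar lamstar : Fin N → ℝ)
    (hopt : ∀ l : ℕ,
      (fun i => -(lam l i) - r * (p (l + 1) i - w (l + 1) i)) ∈ l1Subdiff (p (l + 1)))
    (hp : Tendsto p atTop (𝓝 pstar)) (hw : Tendsto w atTop (𝓝 wstar))
    (hlam : Tendsto lam atTop (𝓝 lamstar)) (heq : pstar = wstar) :
    (fun i => -(lamstar i)) ∈ l1Subdiff pstar := by
  intro y
  have hp' : Tendsto (fun l => p (l + 1)) atTop (𝓝 pstar) :=
    hp.comp (tendsto_add_atTop_nat 1)
  have hw' : Tendsto (fun l => w (l + 1)) atTop (𝓝 wstar) :=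
    hw.comp (tendsto_add_atTop_nat 1)
  have hpi : ∀ i, Tendsto (fun l => p (l + 1) i) atTop (𝓝 (pstar i)) :=
    fun i => ((continuous_apply i).tendsto _).comp hp'
  have hwi : ∀ i, Tendsto (fun l => w (l + 1) i) atTop (𝓝 (wstar i)) :=
    fun i => ((continuous_apply i).tendsto _).comp hw'
  have hli : ∀ i, Tendsto (fun l => lam l i) atTop (𝓝 (lamstar i)) :=
    fun i => ((continuous_apply i).tendsto _).comp hlam
  have hcont : Continuous (l1Norm (N := N)) := by
    unfold l1Norm
    exact continuous_finset_sum _ fun i _ => (continuous_apply i).abs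
  have h1 : Tendsto (fun l => l1Norm (p (l + 1))) atTop (𝓝 (l1Norm pstar)) :=
    (hcont.tendsto _).comp hp'
  have h2 : Tendsto
      (fun l => ∑ i, (-(lam l i) - r * (p (l + 1) i - w (l + 1) i)) * (y i - p (l + 1) i))
      atTop (𝓝 (∑ i, (-(lamstar i)) * (y i - pstar i))) := by
    apply tendsto_finset_sum
    intro i _
    have hterm : Tendsto (fun l => -(lam l i) - r * (p (l + 1) i - w (l + 1) i)) atTop
        (𝓝 (-(lamstar i))) := by
      have : Tendsto (fun l => -(lam l i) - r * (p (l + 1) i - w (l + 1) i)) atTop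
          (𝓝 (-(lamstar i) - r * (pstar i - wstar i))) :=
        (hli i).neg.sub ((tendsto_const_nhds.mul ((hpi i).sub (hwi i))))
      simpa [heq] using this
    exact hterm.mul (tendsto_const_nhds.sub (hpi i))
  refine le_of_tendsto (h1.add h2) (Eventually.of_forall fun l => ?_)
  exact hopt l y
end
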